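/- For a simplicial group G and n ∈ ℕ₀, define (S_G)_n : W̄_n G → Diag_n NG sending (g_i)_{i=n−1,…,0} to (y_i)_{i=n−1,…,0} where, by descending recursion, y_i = (∏_{j=i+1}^{n−1} y_j^{−1} d_j ⋯ d_{i+1} s_i ⋯ s_{j−1}) (∏_{j=n−1}^{i} g_j d_j ⋯ d_{i+1} s_i ⋯ s_{n−1}) ∈ G_n. Then the maps (S_G)_n commute with all face maps: for all k ∈ [0,n] and x ∈ W̄_n G, (x d_k)(S_G)_{n−1} = (x (S_G)_n) d_k. -/

import Mathlib

namespace Paper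

/-- clamped coface map `δ^k : [a] → [b]`. -/
def δOH (k a b : ℕ) : Fin (a+1) →o Fin (b+1) where
  toFun i := ⟨min (if (i:ℕ) < k then (i:ℕ) else (i:ℕ)+1) b, Nat.lt_succ_of_le (Nat.min_le_right _ _)⟩
  monotone' := by
    intro i j hij
    have h : (i:ℕ) ≤ (j:ℕ) := hij
    simp only [Fin.mk_le_mk]
    split_ifs <;> omega

/-- clamped codegeneracy map `σ^k : [a] → [b]`. -/
def σOH (k a b : ℕ) : Fin (a+1) →o Fin (b+1) where
  toFun i := ⟨min (if (i:ℕ) ≤ k then (i:ℕ) else (i:ℕ)-1) b, Nat.lt_succ_of_le (Nat.min_le_right _ _)⟩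
  monotone' := by
    intro i j hij
    have h : (i:ℕ) ≤ (j:ℕ) := hij
    simp only [Fin.mk_le_mk]
    split_ifs <;> omega

/-- `τ^k : [n] → [1]`, sending `[0, n-k]` to `0` and the rest to `1`. -/
def τOH (n k : ℕ) : Fin (n+1) →o Fin 2 where
  toFun i := if (i:ℕ) + k ≤ n then 0 else 1
  monotone' := by
    intro i j hij
    have h : (i:ℕ) ≤ (j:ℕ) := hij
    dsimp only
    split_ifs with h1 h2 h3
    · exact le_refl _
    · exact Fin.zero_le _
    · exact absurd h3 (by omega)
    · exact le_refl _

/-- application of `θ : [m] → [n]` to a natural number (clamped). -/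
def fApp {m n : ℕ} (θ : Fin (m+1) →o Fin (n+1)) (x : ℕ) : ℕ :=
  (θ ⟨min x m, Nat.lt_succ_of_le (Nat.min_le_right _ _)⟩ : Fin (n+1))

theorem fApp_mono {m n : ℕ} (θ : Fin (m+1) →o Fin (n+1)) {x y : ℕ} (h : x ≤ y) :
    fApp θ x ≤ fApp θ y :=
  Fin.le_def.mp (θ.monotone (Fin.mk_le_mk.mpr (by omega)))

theorem fApp_le {m n : ℕ} (θ : Fin (m+1) →o Fin (n+1)) (x : ℕ) : fApp θ x ≤ n :=
  Nat.lt_succ_iff.mp (Fin.isLt _)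

theorem fApp_coe {m n : ℕ} (θ : Fin (m+1) →o Fin (n+1)) (p : Fin (m+1)) :
    fApp θ (p:ℕ) = (θ p : ℕ) := by
  have hp : (⟨min (p:ℕ) m, Nat.lt_succ_of_le (Nat.min_le_right _ _)⟩ : Fin (m+1)) = p :=
    Fin.ext (show min (p:ℕ) m = (p:ℕ) from by have := p.isLt; omega)
  unfold fApp
  rw [hp]

/-- `Spl_{≤ p}(θ) : [p] → [pθ]`. -/
def splLe {m n : ℕ} (θ : Fin (m+1) →o Fin (n+1)) (p : Fin (m+1)) :
    Fin ((p:ℕ)+1) →o Fin ((θ p : ℕ)+1) where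
  toFun i := ⟨fApp θ (i:ℕ), by
    have h1 : fApp θ (i:ℕ) ≤ fApp θ (p:ℕ) := fApp_mono θ (by have := i.isLt; omega)
    have h2 : fApp θ (p:ℕ) = (θ p : ℕ) := fApp_coe θ p
    omega⟩
  monotone' := by
    intro a b hab
    have h : (a:ℕ) ≤ (b:ℕ) := hab
    simp only [Fin.mk_le_mk]
    exact fApp_mono θ h

/-- `Spl_{≥ p}(θ) : [m-p] → [n-pθ]`. -/
def splGe {m n : ℕ} (θ : Fin (m+1) →o Fin (n+1)) (p : Fin (m+1)) :
    Fin (m - (p:ℕ) + 1) →o Fin (n - (θ p : ℕ) + 1) where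
  toFun i := ⟨fApp θ ((i:ℕ) + (p:ℕ)) - (θ p : ℕ), by
    have h1 : fApp θ ((i:ℕ) + (p:ℕ)) ≤ n := fApp_le θ _
    omega⟩
  monotone' := by
    intro a b hab
    have h : (a:ℕ) ≤ (b:ℕ) := hab
    simp only [Fin.mk_le_mk]
    have := fApp_mono θ (show (a:ℕ) + (p:ℕ) ≤ (b:ℕ) + (p:ℕ) by omega)
    omega

/-- the restriction `θ|_[i]^[j] : [i] → [j]` of `θ` (clamped). -/
def restrictOH {m n : ℕ} (θ : Fin (m+1) →o Fin (n+1)) (i j : ℕ) : Fin (i+1) →o Fin (j+1) where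
  toFun k := ⟨min (fApp θ (k:ℕ)) j, Nat.lt_succ_of_le (Nat.min_le_right _ _)⟩
  monotone' := by
    intro a b hab
    have h : (a:ℕ) ≤ (b:ℕ) := hab
    simp only [Fin.mk_le_mk]
    have := fApp_mono θ h
    omega

/-- ascending product `f a * f (a+1) * ⋯ * f (b-1)`. -/
def aProd {γ : Type*} [Monoid γ] (f : ℕ → γ) (a : ℕ) : ℕ → γ
  | 0 => 1
  | b+1 => if a ≤ b then aProd f a b * f b else 1

/-- descending product `f (b-1) * f (b-2) * ⋯ * f a`. -/
def dProd {γ : Type*} [Monoid γ] (f : ℕ → γ) (a : ℕ) : ℕ → γ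
  | 0 => 1
  | b+1 => if a ≤ b then f b * dProd f a b else 1

end Paper
namespace Paper

/-- A simplicial group, given by levels, structure maps, functoriality,
and levelwise multiplicativity. -/
structure SGrp where
  obj : ℕ → Type
  grp : ∀ n, Group (obj n)
  map : ∀ {m n : ℕ}, (Fin (m+1) →o Fin (n+1)) → obj n → obj m
  map_id : ∀ {n : ℕ} (x : obj n), map OrderHom.id x = x
  map_comp : ∀ {l m n : ℕ} (α : Fin (l+1) →o Fin (m+1)) (β : Fin (m+1) →o Fin (n+1)) (x : obj n),
    map α (map β x) = map (β.comp α) x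
  map_mul : ∀ {m n : ℕ} (θ : Fin (m+1) →o Fin (n+1)) (x y : obj n),
    map θ (x * y) = map θ x * map θ y

attribute [instance] SGrp.grp

namespace SGrp

/-- face `d_k : G_N → G_{N-1}` -/
def face (G : SGrp) (k : ℕ) {N : ℕ} : G.obj N → G.obj (N-1) := G.map (δOH k (N-1) N)

/-- degeneracy `s_k : G_M → G_{M+1}` -/
def deg (G : SGrp) (k : ℕ) {M : ℕ} : G.obj M → G.obj (M+1) := G.map (σOH k (M+1) M)

/-- transport between levels (junk value `1` when levels differ). -/
def gcast (G : SGrp) {a : ℕ} (b : ℕ) (x : G.obj a) : G.obj b := if h : a = b then h ▸ x else 1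

/-- descending composite of faces `d_{i+c} d_{i+c-1} ⋯ d_{i+1}`. -/
def dcomp (G : SGrp) : (i c : ℕ) → {N : ℕ} → G.obj N → G.obj (N - c)
  | _, 0, _, x => x
  | i, c+1, _, x => G.face (i+1) (G.dcomp (i+1) c x)

/-- ascending composite of degeneracies `s_i s_{i+1} ⋯ s_{i+c-1}`. -/
def scomp (G : SGrp) : (i c : ℕ) → {M : ℕ} → G.obj M → G.obj (M + c)
  | _, 0, _, x => x
  | i, c+1, _, x => G.deg (i+c) (G.scomp i c x)

/-- `x ↦ x d_j ⋯ d_{i+1} s_i ⋯ s_{j-1}`, an endomap of `G_N`. -/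
def ds (G : SGrp) (i j : ℕ) {N : ℕ} (x : G.obj N) : G.obj N :=
  G.gcast N (G.scomp i (min (j - i) N) (G.dcomp i (min (j - i) N) x))

/-- `x ↦ x d_j ⋯ d_{i+1} s_i ⋯ s_{n-1} : G_j → G_n`. -/
def dsTo (G : SGrp) (i n : ℕ) {j : ℕ} (x : G.obj j) : G.obj n :=
  G.gcast n (G.scomp i (n - i) (G.gcast i (G.dcomp i (j - i) x)))

/-- the `y_i` of the section `S_G`, defined by descending recursion (with fuel). -/
def yAux (G : SGrp) (n : ℕ) (g : ∀ j : ℕ, G.obj j) : ℕ → ℕ → G.obj n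
  | 0, _ => 1
  | fuel+1, i =>
      aProd (fun j => G.ds i j (G.yAux n g fuel j)⁻¹) (i+1) n *
      dProd (fun j => G.dsTo i n (g j)) i n

/-- `W̄_n G = ∏_{j = n-1}^{0} G_j`. -/
def WbarN (G : SGrp) (n : ℕ) : Type := ∀ j : Fin n, G.obj (j:ℕ)

/-- extension of a tuple in `W̄_n G` by `1`. -/
def gE (G : SGrp) {n : ℕ} (g : G.WbarN n) : ∀ j : ℕ, G.obj j :=
  fun j => if h : j < n then g ⟨j, h⟩ else 1

/-- the coretraction `(S_G)_n : W̄_n G → Diag_n NG = (G_n)^n`. -/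
def SGn (G : SGrp) (n : ℕ) (g : G.WbarN n) : Fin n → G.obj n :=
  fun i => G.yAux n (G.gE g) n (i:ℕ)

/-- extension of a tuple in `(G_n)^n` by `1`. -/
def xE (G : SGrp) {n : ℕ} (x : Fin n → G.obj n) : ℕ → G.obj n :=
  fun j => if h : j < n then x ⟨j, h⟩ else 1

/-- the structure map `W̄_θ : W̄_n G → W̄_m G` of the Kan classifying simplicial set. -/
def wbarMap (G : SGrp) {m n : ℕ} (θ : Fin (m+1) →o Fin (n+1)) (g : G.WbarN n) : G.WbarN m :=
  fun i => dProd (fun j => G.map (restrictOH θ (i:ℕ) j) (G.gE g j))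
    ((θ i.castSucc : Fin (n+1)) : ℕ) ((θ i.succ : Fin (n+1)) : ℕ)

/-- the structure map `(Diag NG)_θ : (G_n)^n → (G_m)^m` of the diagonal of the nerve. -/
def diagMap (G : SGrp) {m n : ℕ} (θ : Fin (m+1) →o Fin (n+1)) (x : Fin n → G.obj n) :
    Fin m → G.obj m :=
  fun i => dProd (fun j => G.map θ (G.xE x j))
    ((θ i.castSucc : Fin (n+1)) : ℕ) ((θ i.succ : Fin (n+1)) : ℕ)

/-- the retraction `(D_G)_n : Diag_n NG → W̄_n G`, `(g_i)_i ↦ (g_i d_n ⋯ d_{i+1})_i`. -/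
def DGn (G : SGrp) (n : ℕ) (x : Fin n → G.obj n) : G.WbarN n :=
  fun i => G.gcast (i:ℕ) (G.dcomp (i:ℕ) (n - (i:ℕ)) (x i))

/-- the components `y_i^{(n+1-k)}` of the homotopy `H`, by descending recursion (with fuel). -/
def hAux (G : SGrp) (n k : ℕ) (g : ℕ → G.obj n) : ℕ → ℕ → G.obj n
  | 0, _ => 1
  | fuel+1, i =>
      if k ≤ i + 1 then g i
      else
        aProd (fun j => G.ds i j (G.hAux n k g fuel j)⁻¹) (i+1) (k-1) *
        dProd (fun j => G.ds i (k-1) (g j)) i (k-1)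

end SGrp

/-- recover `k` from the simplex `τ^{n+1-k} ∈ Δ^1_n`: the number of vertices sent to `0`. -/
def kOf {n : ℕ} (t : Fin (n+1) →o Fin 2) : ℕ :=
  (Finset.univ.filter (fun i => t i = 0)).card

namespace SGrp

/-- the homotopy `H_n : Diag_n NG × Δ^1_n → Diag_n NG`. -/
def Hn (G : SGrp) (n : ℕ) (x : Fin n → G.obj n) (t : Fin (n+1) →o Fin 2) : Fin n → G.obj n :=
  fun i => G.hAux n (kOf t) (G.xE x) (n+1) (i:ℕ)

end SGrp

/-- morphisms of simplicial groups. -/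
structure SGrpHom (G G' : SGrp) where
  app : ∀ n, G.obj n → G'.obj n
  comm : ∀ {m n : ℕ} (θ : Fin (m+1) →o Fin (n+1)) (x : G.obj n),
    app m (G.map θ x) = G'.map θ (app n x)
  mul : ∀ (n : ℕ) (x y : G.obj n), app n (x * y) = app n x * app n y

end Paper

/-!
Turning the ascending product of inverses into the inverse of a descending one,
`y_i = (∏_{j>i} y_j d_j⋯d_{i+1}s_i⋯s_{j-1})⁻¹ · ∏_{j≥i} g_j d_j⋯d_{i+1}s_i⋯s_{n-1}`.
The faces `d_k` of `W̄G` and of `Diag NG` both act on components through the nerve face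
(entries `k` and `k-1` are multiplied, later entries move down), and `y_i(x d_k)` is the `i`-th
entry of the nerve face of `(y_j(x) d_k)_j`. This follows by descending induction on `i`: moving
`d_k` past the composites `d_j⋯d_{i+1}s_i⋯s_{j-1}` by the simplicial identities turns each factor
in the formula for `y_i(x d_k)` into the `d_k`-image of a nerve face of the factors for `x`, and a
product of nerve faces is the product with the two middle factors merged. Two cancellations are
left: for `k = i+1`, `(w d_{i+1} s_i) d_k = w d_k` cancels `y_{i+1}(x)` against the factor
`j = i+1` of `y_i(x)`; for `k ≥ n`, the top factors `j = n-1` of the two products cancel.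

Each composite of faces and degeneracies is `G.map` of an explicit order hom, so every simplicial
identity used is a pointwise identity of monotone maps between `Fin`s.
-/

namespace Paper

/-- The face `d_k` of the nerve of a group, applied to a sequence of elements. -/
def nerveFace {γ : Type*} [Mul γ] (k : ℕ) (u : ℕ → γ) (j : ℕ) : γ :=
  if k ≤ j then u (j+1) else if j+1 = k then u (j+1) * u j else u j

section Products
variable {γ : Type*} [Monoid γ]

theorem dProd_succ (f : ℕ → γ) (a b : ℕ) :
    dProd f a (b+1) = if a ≤ b then f b * dProd f a b else 1 := rfl

theorem dProd_succ_of_le (f : ℕ → γ) {a b : ℕ} (h : a ≤ b) :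
    dProd f a (b+1) = f b * dProd f a b := if_pos h

theorem dProd_of_le (f : ℕ → γ) {a b : ℕ} (h : b ≤ a) : dProd f a b = 1 := by
  cases b with
  | zero => rfl
  | succ b => exact if_neg (by omega)

theorem aProd_of_le (f : ℕ → γ) {a b : ℕ} (h : b ≤ a) : aProd f a b = 1 := by
  cases b with
  | zero => rfl
  | succ b => exact if_neg (by omega)

theorem dProd_single (f : ℕ → γ) (a : ℕ) : dProd f a (a+1) = f a := by
  rw [dProd_succ_of_le f le_rfl, dProd_of_le f le_rfl, mul_one]

theorem dProd_congr {f g : ℕ → γ} {a b : ℕ} (h : ∀ j, a ≤ j → j < b → f j = g j) :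
    dProd f a b = dProd g a b := by
  induction b with
  | zero => rfl
  | succ b ih =>
    rw [dProd_succ, dProd_succ]
    split_ifs with hab
    · rw [ih fun j h1 h2 => h j h1 (by omega), h b hab (by omega)]
    · rfl

theorem aProd_congr {f g : ℕ → γ} {a b : ℕ} (h : ∀ j, a ≤ j → j < b → f j = g j) :
    aProd f a b = aProd g a b := by
  induction b with
  | zero => rfl
  | succ b ih =>
    simp only [aProd]
    split_ifs with hab
    · rw [ih fun j h1 h2 => h j h1 (by omega), h b hab (by omega)]
    · rfl

theorem dProd_shift (f : ℕ → γ) (a b : ℕ) :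
    dProd (fun j => f (j+1)) a b = dProd f (a+1) (b+1) := by
  induction b with
  | zero => exact (dProd_of_le f (by omega)).symm
  | succ b ih =>
    rw [dProd_succ, dProd_succ f (a+1), ih]
    simp only [Nat.add_le_add_iff_right]

theorem dProd_eq_mul_of_lt (f : ℕ → γ) {a b : ℕ} (h : a < b) :
    dProd f a b = dProd f (a+1) b * f a := by
  induction b, h using Nat.le_induction with
  | base => rw [dProd_single, dProd_of_le f le_rfl, one_mul]
  | succ b hab ih => rw [dProd_succ_of_le f (by omega), ih, dProd_succ_of_le f hab, mul_assoc]

variable (u : ℕ → γ) {k a b : ℕ}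

theorem dProd_nerveFace_of_le (h : k ≤ a) : dProd (nerveFace k u) a b = dProd u (a+1) (b+1) := by
  rw [← dProd_shift]
  exact dProd_congr fun j hj _ => if_pos (by omega)

theorem dProd_nerveFace_of_lt (h : b < k) : dProd (nerveFace k u) a b = dProd u a b :=
  dProd_congr fun j _ hj => by rw [nerveFace, if_neg (by omega), if_neg (by omega)]

theorem dProd_nerveFace (h₁ : a < k) (h₂ : k ≤ b) :
    dProd (nerveFace k u) a b = dProd u a (b+1) := by
  induction b, h₂ using Nat.le_induction with
  | base =>
    obtain ⟨K, rfl⟩ : ∃ K, k = K+1 := ⟨k-1, by omega⟩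
    rw [dProd_succ_of_le _ (by omega), dProd_nerveFace_of_lt u (lt_add_one K), nerveFace,
      if_neg (by omega), if_pos rfl, dProd_succ_of_le u (by omega), dProd_succ_of_le u (by omega),
      mul_assoc]
  | succ b hkb ih =>
    rw [dProd_succ_of_le _ (by omega), ih, nerveFace, if_pos hkb,
      dProd_succ_of_le u (show a ≤ b+1 by omega)]

end Products

theorem aProd_inv {γ : Type*} [Group γ] (f : ℕ → γ) (a b : ℕ) :
    aProd (fun j => (f j)⁻¹) a b = (dProd f a b)⁻¹ := by
  induction b with
  | zero => exact inv_one.symm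
  | succ b ih =>
    simp only [aProd, dProd]
    split_ifs
    · rw [ih, mul_inv_rev]
    · exact inv_one.symm

def clampOH (a b : ℕ) (f : ℕ → ℕ) (hf : ∀ p q, p ≤ q → f p ≤ f q) : Fin (a+1) →o Fin (b+1) where
  toFun p := ⟨min (f p) b, Nat.lt_succ_of_le (min_le_right _ _)⟩
  monotone' p q h := min_le_min_right b (hf p q h)

@[simp] theorem clampOH_val (a b : ℕ) (f : ℕ → ℕ) (hf : ∀ p q, p ≤ q → f p ≤ f q) (p : Fin (a+1)) :
    (clampOH a b f hf p : ℕ) = min (f p) b := rfl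

@[simp] theorem δOH_val (k a b : ℕ) (p : Fin (a+1)) :
    (δOH k a b p : ℕ) = min (if (p:ℕ) < k then (p:ℕ) else (p:ℕ)+1) b := rfl

@[simp] theorem σOH_val (k a b : ℕ) (p : Fin (a+1)) :
    (σOH k a b p : ℕ) = min (if (p:ℕ) ≤ k then (p:ℕ) else (p:ℕ)-1) b := rfl

@[simp] theorem restrictOH_val {a b : ℕ} (θ : Fin (a+1) →o Fin (b+1)) (i j : ℕ) (p : Fin (i+1)) :
    (restrictOH θ i j p : ℕ) = min (fApp θ p) j := rfl

@[simp] theorem fApp_δOH (k a b x : ℕ) :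
    fApp (δOH k a b) x = min (if min x a < k then min x a else min x a + 1) b := rfl

theorem dProd_δOH_castSucc_succ {γ : Type*} [Monoid γ] (f : ℕ → γ) (k : ℕ) {m : ℕ} (j : Fin m) :
    dProd f (δOH k m (m+1) j.castSucc) (δOH k m (m+1) j.succ) = nerveFace k f j := by
  have hj := j.is_lt
  simp only [δOH_val, Fin.val_castSucc, Fin.val_succ, nerveFace]
  by_cases hkj : k ≤ j
  · rw [if_neg (by omega), if_neg (by omega), min_eq_left (by omega), min_eq_left (by omega),
      if_pos hkj, dProd_single]
  · rw [if_pos (by omega), min_eq_left (by omega), if_neg hkj]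
    by_cases hjk : (j:ℕ) + 1 = k
    · rw [if_neg (by omega), min_eq_left (by omega), if_pos hjk, dProd_succ_of_le f (by omega),
        dProd_single]
    · rw [if_pos (by omega), min_eq_left (by omega), if_neg hjk, dProd_single]

def dcompOH (i c N : ℕ) : Fin (N-c+1) →o Fin (N+1) :=
  clampOH _ _ (fun p => if p ≤ i then p else p+c) (by intro p q h; split_ifs <;> omega)

def scompOH (i c M : ℕ) : Fin (M+c+1) →o Fin (M+1) :=
  clampOH _ _ (fun p => if p ≤ i then p else if p ≤ i+c then i else p-c)
    (by intro p q h; split_ifs <;> omega)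

def dsOH (i j N : ℕ) : Fin (N+1) →o Fin (N+1) :=
  clampOH _ _ (fun p => if p ≤ i then p else if p ≤ j then i else p)
    (by intro p q h; split_ifs <;> omega)

def dsToOH (i n j : ℕ) : Fin (n+1) →o Fin (j+1) :=
  clampOH _ _ (fun p => min p i) fun _ _ h => min_le_min_right i h

theorem orderHom_ext_val {a b : ℕ} {f g : Fin (a+1) →o Fin (b+1)}
    (h : ∀ p : Fin (a+1), (f p : ℕ) = g p) : f = g :=
  OrderHom.ext _ _ (funext fun p => Fin.ext (h p))

namespace SGrp
variable (G : SGrp)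

theorem map_one {m n : ℕ} (θ : Fin (m+1) →o Fin (n+1)) : G.map θ (1 : G.obj n) = 1 :=
  mul_eq_left.mp (by rw [← G.map_mul, one_mul])

theorem map_inv {m n : ℕ} (θ : Fin (m+1) →o Fin (n+1)) (x : G.obj n) :
    G.map θ x⁻¹ = (G.map θ x)⁻¹ :=
  eq_inv_of_mul_eq_one_left (by rw [← G.map_mul, inv_mul_cancel, G.map_one])

theorem map_dProd {m n : ℕ} (θ : Fin (m+1) →o Fin (n+1)) (f : ℕ → G.obj n) (a b : ℕ) :
    G.map θ (dProd f a b) = dProd (fun j => G.map θ (f j)) a b := by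
  induction b with
  | zero => exact G.map_one θ
  | succ b ih =>
    rw [dProd_succ, dProd_succ]
    split_ifs
    · rw [G.map_mul, ih]
    · exact G.map_one θ

theorem map_nerveFace {m n : ℕ} (θ : Fin (m+1) →o Fin (n+1)) (k : ℕ) (u : ℕ → G.obj n) (j : ℕ) :
    G.map θ (nerveFace k u j) = nerveFace k (fun l => G.map θ (u l)) j := by
  unfold nerveFace
  split_ifs
  · rfl
  · exact G.map_mul θ _ _
  · rfl

theorem map_map_of_comp_eq {l m m' n : ℕ} {α : Fin (l+1) →o Fin (m+1)}
    {β : Fin (m+1) →o Fin (n+1)} {α' : Fin (l+1) →o Fin (m'+1)} {β' : Fin (m'+1) →o Fin (n+1)}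
    (h : β.comp α = β'.comp α') (x : G.obj n) :
    G.map α (G.map β x) = G.map α' (G.map β' x) := by
  rw [G.map_comp, G.map_comp, h]

theorem gcast_map {a b c : ℕ} (e : a = b) (φ : Fin (a+1) →o Fin (c+1)) (x : G.obj c) :
    G.gcast b (G.map φ x) = G.map (φ.comp (clampOH b a id fun _ _ => id)) x := by
  subst e
  have hid : clampOH a a id (fun _ _ => id) = OrderHom.id :=
    orderHom_ext_val fun p => by simp [p.is_le]
  rw [hid, OrderHom.comp_id]
  exact dif_pos rfl

theorem dcomp_eq_map (c : ℕ) {i N : ℕ} (h : i + c ≤ N) (x : G.obj N) :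
    G.dcomp i c x = G.map (dcompOH i c N) x := by
  induction c generalizing i with
  | zero =>
    have hid : dcompOH i 0 N = OrderHom.id :=
      orderHom_ext_val fun p => by
        have := p.is_lt
        simp only [dcompOH, clampOH_val, OrderHom.id_coe, id]
        split_ifs <;> omega
    rw [hid, G.map_id]
    rfl
  | succ c ih =>
    rw [dcomp, ih (by omega), face, G.map_comp]
    congr 1
    refine orderHom_ext_val fun p => ?_
    have := p.is_lt
    simp only [dcompOH, OrderHom.comp_coe, Function.comp_apply, clampOH_val, δOH_val]
    split_ifs <;> omega

theorem scomp_eq_map (c : ℕ) {i M : ℕ} (h : i ≤ M) (x : G.obj M) :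
    G.scomp i c x = G.map (scompOH i c M) x := by
  induction c with
  | zero =>
    have hid : scompOH i 0 M = OrderHom.id :=
      orderHom_ext_val fun p => by
        simp only [scompOH, clampOH_val, OrderHom.id_coe, id]
        split_ifs <;> omega
    rw [hid, G.map_id]
    rfl
  | succ c ih =>
    rw [scomp, ih, deg, G.map_comp]
    congr 1
    refine orderHom_ext_val fun p => ?_
    have := p.is_lt
    simp only [scompOH, OrderHom.comp_coe, Function.comp_apply, clampOH_val, σOH_val, Nat.add_eq]
    split_ifs <;> omega

theorem ds_eq_map {N : ℕ} {i j : ℕ} (h₁ : i ≤ j) (h₂ : j ≤ N) (x : G.obj N) :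
    G.ds i j x = G.map (dsOH i j N) x := by
  rw [ds, min_eq_left (by omega), G.dcomp_eq_map _ (by omega), G.scomp_eq_map _ (by omega),
    G.map_comp, G.gcast_map (by omega)]
  congr 1
  refine orderHom_ext_val fun p => ?_
  have := p.is_lt
  simp only [dsOH, dcompOH, scompOH, OrderHom.comp_coe, Function.comp_apply, clampOH_val, id,
    min_def]
  split_ifs <;> omega

theorem dsTo_eq_map {j : ℕ} {i n : ℕ} (h₁ : i ≤ j) (h₂ : i ≤ n) (x : G.obj j) :
    G.dsTo i n x = G.map (dsToOH i n j) x := by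
  rw [dsTo, G.dcomp_eq_map _ (by omega), G.gcast_map (by omega), G.scomp_eq_map _ le_rfl,
    G.map_comp, G.gcast_map (by omega)]
  congr 1
  refine orderHom_ext_val fun p => ?_
  have := p.is_lt
  simp only [dsToOH, dcompOH, scompOH, OrderHom.comp_coe, Function.comp_apply, clampOH_val, id,
    min_def]
  split_ifs <;> omega

theorem ds_mul {N : ℕ} {i j : ℕ} (h₁ : i ≤ j) (h₂ : j ≤ N) (x y : G.obj N) :
    G.ds i j (x * y) = G.ds i j x * G.ds i j y := by
  simp only [G.ds_eq_map h₁ h₂, G.map_mul]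

theorem dsTo_mul {j : ℕ} {i n : ℕ} (h₁ : i ≤ j) (h₂ : i ≤ n) (x y : G.obj j) :
    G.dsTo i n (x * y) = G.dsTo i n x * G.dsTo i n y := by
  simp only [G.dsTo_eq_map h₁ h₂, G.map_mul]

/-- The paper's `y_i ∈ G_n`: `yAux` with enough fuel. -/
def y (n : ℕ) (g : ∀ j : ℕ, G.obj j) (i : ℕ) : G.obj n := G.yAux n g n i

theorem yAux_succ_of_le (n : ℕ) (g : ∀ j : ℕ, G.obj j) (fuel : ℕ) {i : ℕ} (h : n ≤ i + fuel) :
    G.yAux n g (fuel+1) i = G.yAux n g fuel i := by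
  induction fuel generalizing i with
  | zero =>
    rw [yAux.eq_2, aProd_of_le _ (by omega), dProd_of_le _ (by omega), one_mul]
    rfl
  | succ fuel ih =>
    rw [yAux, yAux]
    congr 1
    exact aProd_congr fun j hj _ => by rw [ih (by omega)]

theorem y_eq (n : ℕ) (g : ∀ j : ℕ, G.obj j) (i : ℕ) :
    G.y n g i = (dProd (fun j => G.ds i j (G.y n g j)) (i+1) n)⁻¹ *
      dProd (fun j => G.dsTo i n (g j)) i n := by
  rw [y, ← G.yAux_succ_of_le n g n (by omega), yAux, ← aProd_inv]
  congr 1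
  exact aProd_congr fun j hj hjn => by
    rw [G.ds_eq_map (by omega) hjn.le, G.ds_eq_map (by omega) hjn.le, G.map_inv]; rfl

theorem y_of_le {n : ℕ} (g : ∀ j : ℕ, G.obj j) {i : ℕ} (h : n ≤ i) : G.y n g i = 1 := by
  rw [y_eq, dProd_of_le _ (by omega), dProd_of_le _ h, inv_one, one_mul]

theorem y_self (m : ℕ) (g : ∀ j : ℕ, G.obj j) : G.y (m+1) g m = G.dsTo m (m+1) (g m) := by
  rw [y_eq, dProd_of_le _ le_rfl, dProd_single, inv_one, one_mul]

theorem xE_SGn (n : ℕ) (g : G.WbarN n) : G.xE (G.SGn n g) = G.y n (G.gE g) := by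
  funext j
  by_cases hj : j < n
  · exact dif_pos hj
  · rw [xE, dif_neg hj, G.y_of_le _ (not_lt.mp hj)]

variable {m k i j : ℕ}

theorem ds_map_δOH_of_le (hki : k ≤ i) (hij : i ≤ j) (hjm : j < m) (w : G.obj (m+1)) :
    G.ds i j (G.map (δOH k m (m+1)) w) = G.map (δOH k m (m+1)) (G.ds (i+1) (j+1) w) := by
  rw [G.ds_eq_map hij hjm.le, G.ds_eq_map (by omega) (by omega)]
  refine G.map_map_of_comp_eq (orderHom_ext_val fun p => ?_) w
  have := p.is_lt
  simp only [OrderHom.comp_coe, Function.comp_apply, dsOH, clampOH_val, δOH_val]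
  split_ifs <;> omega

theorem ds_map_δOH_of_lt_of_le (hik : i < k) (hkj : k ≤ j+1) (hjm : j < m) (w : G.obj (m+1)) :
    G.ds i j (G.map (δOH k m (m+1)) w) = G.map (δOH k m (m+1)) (G.ds i (j+1) w) := by
  rw [G.ds_eq_map (by omega) hjm.le, G.ds_eq_map (by omega) (by omega)]
  refine G.map_map_of_comp_eq (orderHom_ext_val fun p => ?_) w
  have := p.is_lt
  simp only [OrderHom.comp_coe, Function.comp_apply, dsOH, clampOH_val, δOH_val]
  split_ifs <;> omega

theorem ds_map_δOH_of_lt (hij : i ≤ j) (hjk : j < k) (hjm : j < m) (w : G.obj (m+1)) :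
    G.ds i j (G.map (δOH k m (m+1)) w) = G.map (δOH k m (m+1)) (G.ds i j w) := by
  rw [G.ds_eq_map hij hjm.le, G.ds_eq_map hij (by omega)]
  refine G.map_map_of_comp_eq (orderHom_ext_val fun p => ?_) w
  have := p.is_lt
  simp only [OrderHom.comp_coe, Function.comp_apply, dsOH, clampOH_val, δOH_val]
  split_ifs <;> omega

theorem map_δOH_ds_of_succ_eq (hik : i+1 = k) (him : i ≤ m) (w : G.obj (m+1)) :
    G.map (δOH k m (m+1)) (G.ds i (i+1) w) = G.map (δOH k m (m+1)) w := by
  rw [G.ds_eq_map (by omega) (by omega), G.map_comp]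
  congr 1
  refine orderHom_ext_val fun p => ?_
  have := p.is_lt
  simp only [OrderHom.comp_coe, Function.comp_apply, dsOH, clampOH_val, δOH_val]
  split_ifs <;> omega

theorem map_δOH_ds_dsTo (him : i < m) (hmk : m < k) (u : G.obj m) :
    G.map (δOH k m (m+1)) (G.ds i m (G.dsTo m (m+1) u)) =
      G.map (δOH k m (m+1)) (G.dsTo i (m+1) u) := by
  rw [G.ds_eq_map him.le (by omega), G.dsTo_eq_map le_rfl (by omega),
    G.dsTo_eq_map him.le (by omega), G.map_comp, G.map_comp, G.map_comp]
  congr 1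
  refine orderHom_ext_val fun p => ?_
  have := p.is_lt
  simp only [OrderHom.comp_coe, Function.comp_apply, dsOH, dsToOH, clampOH_val, δOH_val]
  split_ifs <;> omega

theorem dsTo_map_restrictOH_of_le (hki : k ≤ i) (hij : i ≤ j) (hjm : j < m) (u : G.obj (j+1)) :
    G.dsTo i m (G.map (restrictOH (δOH k m (m+1)) j (j+1)) u) =
      G.map (δOH k m (m+1)) (G.dsTo (i+1) (m+1) u) := by
  rw [G.dsTo_eq_map hij (by omega), G.dsTo_eq_map (by omega) (by omega)]
  refine G.map_map_of_comp_eq (orderHom_ext_val fun p => ?_) u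
  have := p.is_lt
  simp only [OrderHom.comp_coe, Function.comp_apply, dsToOH, clampOH_val, δOH_val,
    restrictOH_val, fApp_δOH]
  split_ifs <;> omega

theorem dsTo_map_restrictOH_of_lt_of_le (hik : i < k) (hkj : k ≤ j+1) (hij : i ≤ j) (hjm : j < m)
    (u : G.obj (j+1)) :
    G.dsTo i m (G.map (restrictOH (δOH k m (m+1)) j (j+1)) u) =
      G.map (δOH k m (m+1)) (G.dsTo i (m+1) u) := by
  rw [G.dsTo_eq_map hij (by omega), G.dsTo_eq_map (by omega) (by omega)]
  refine G.map_map_of_comp_eq (orderHom_ext_val fun p => ?_) u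
  have := p.is_lt
  simp only [OrderHom.comp_coe, Function.comp_apply, dsToOH, clampOH_val, δOH_val,
    restrictOH_val, fApp_δOH]
  split_ifs <;> omega

theorem dsTo_map_restrictOH_of_lt (hij : i ≤ j) (hjk : j < k) (hjm : j < m) (u : G.obj j) :
    G.dsTo i m (G.map (restrictOH (δOH k m (m+1)) j j) u) =
      G.map (δOH k m (m+1)) (G.dsTo i (m+1) u) := by
  rw [G.dsTo_eq_map hij (by omega), G.dsTo_eq_map hij (by omega)]
  refine G.map_map_of_comp_eq (orderHom_ext_val fun p => ?_) u
  have := p.is_lt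
  simp only [OrderHom.comp_coe, Function.comp_apply, dsToOH, clampOH_val, δOH_val,
    restrictOH_val, fApp_δOH]
  split_ifs <;> omega

theorem ds_map_δOH_nerveFace (hik : i < k) (hij : i < j) (hjm : j < m) (u : ℕ → G.obj (m+1)) :
    G.ds i j (G.map (δOH k m (m+1)) (nerveFace k u j)) =
      G.map (δOH k m (m+1)) (nerveFace k (fun l => G.ds i l (u l)) j) := by
  rw [G.map_nerveFace, G.map_nerveFace]
  unfold nerveFace
  split_ifs with h₁ h₂
  · exact G.ds_map_δOH_of_lt_of_le hik (by omega) hjm _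
  · rw [G.ds_mul hij.le hjm.le, G.ds_map_δOH_of_lt_of_le hik (by omega) hjm,
      G.ds_map_δOH_of_lt hij.le (by omega) hjm]
  · exact G.ds_map_δOH_of_lt hij.le (by omega) hjm _

theorem gE_of_lt {n : ℕ} (g : G.WbarN n) (hj : j < n) : G.gE g j = g ⟨j, hj⟩ := dif_pos hj

theorem gE_wbarMap_δOH (g : G.WbarN (m+1)) (hjm : j < m) :
    G.gE (G.wbarMap (δOH k m (m+1)) g) j =
      nerveFace k (fun l => G.map (restrictOH (δOH k m (m+1)) j l) (G.gE g l)) j := by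
  rw [G.gE_of_lt _ hjm]
  exact dProd_δOH_castSucc_succ _ k ⟨j, hjm⟩

theorem dsTo_gE_wbarMap_δOH_of_le (g : G.WbarN (m+1)) (hki : k ≤ i) (hij : i ≤ j) (hjm : j < m) :
    G.dsTo i m (G.gE (G.wbarMap (δOH k m (m+1)) g) j) =
      G.map (δOH k m (m+1)) (G.dsTo (i+1) (m+1) (G.gE g (j+1))) := by
  rw [G.gE_wbarMap_δOH g hjm, nerveFace, if_pos (by omega)]
  exact G.dsTo_map_restrictOH_of_le hki hij hjm _

theorem dsTo_gE_wbarMap_δOH_of_lt (g : G.WbarN (m+1)) (hik : i < k) (hij : i ≤ j) (hjm : j < m) :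
    G.dsTo i m (G.gE (G.wbarMap (δOH k m (m+1)) g) j) =
      G.map (δOH k m (m+1)) (nerveFace k (fun l => G.dsTo i (m+1) (G.gE g l)) j) := by
  rw [G.gE_wbarMap_δOH g hjm, G.map_nerveFace]
  unfold nerveFace
  split_ifs with h₁ h₂
  · exact G.dsTo_map_restrictOH_of_lt_of_le hik (by omega) hij hjm _
  · rw [G.dsTo_mul hij (by omega), G.dsTo_map_restrictOH_of_lt_of_le hik (by omega) hij hjm,
      G.dsTo_map_restrictOH_of_lt hij (by omega) hjm]
  · exact G.dsTo_map_restrictOH_of_lt hij (by omega) hjm _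

theorem y_wbarMap_δOH_of_le (g : G.WbarN (m+1)) (hki : k ≤ i)
    (ih : ∀ j, i < j → j < m → G.y m (G.gE (G.wbarMap (δOH k m (m+1)) g)) j =
      G.map (δOH k m (m+1)) (nerveFace k (G.y (m+1) (G.gE g)) j)) :
    G.y m (G.gE (G.wbarMap (δOH k m (m+1)) g)) i =
      G.map (δOH k m (m+1)) (G.y (m+1) (G.gE g) (i+1)) := by
  have hds : dProd (fun j => G.ds i j (G.y m (G.gE (G.wbarMap (δOH k m (m+1)) g)) j)) (i+1) m =
      G.map (δOH k m (m+1))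
        (dProd (fun j => G.ds (i+1) j (G.y (m+1) (G.gE g) j)) (i+1+1) (m+1)) := by
    rw [G.map_dProd, ← dProd_shift]
    exact dProd_congr fun j hij hjm => by
      rw [ih j (by omega) hjm, nerveFace, if_pos (by omega), G.ds_map_δOH_of_le hki (by omega) hjm]
  have hdsTo : dProd (fun j => G.dsTo i m (G.gE (G.wbarMap (δOH k m (m+1)) g) j)) i m =
      G.map (δOH k m (m+1)) (dProd (fun j => G.dsTo (i+1) (m+1) (G.gE g j)) (i+1) (m+1)) := by
    rw [G.map_dProd, ← dProd_shift]
    exact dProd_congr fun j hij hjm => G.dsTo_gE_wbarMap_δOH_of_le g hki hij hjm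
  rw [G.y_eq m _ i, hds, hdsTo, G.y_eq (m+1) _ (i+1), G.map_mul, G.map_inv]

theorem y_wbarMap_δOH_of_lt (g : G.WbarN (m+1)) (hik : i < k)
    (ih : ∀ j, i < j → j < m → G.y m (G.gE (G.wbarMap (δOH k m (m+1)) g)) j =
      G.map (δOH k m (m+1)) (nerveFace k (G.y (m+1) (G.gE g)) j)) :
    G.y m (G.gE (G.wbarMap (δOH k m (m+1)) g)) i =
      G.map (δOH k m (m+1))
        ((dProd (nerveFace k fun l => G.ds i l (G.y (m+1) (G.gE g) l)) (i+1) m)⁻¹ *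
          dProd (nerveFace k fun l => G.dsTo i (m+1) (G.gE g l)) i m) := by
  have hds : dProd (fun j => G.ds i j (G.y m (G.gE (G.wbarMap (δOH k m (m+1)) g)) j)) (i+1) m =
      G.map (δOH k m (m+1))
        (dProd (nerveFace k fun l => G.ds i l (G.y (m+1) (G.gE g) l)) (i+1) m) := by
    rw [G.map_dProd]
    exact dProd_congr fun j hij hjm => by rw [ih j hij hjm, G.ds_map_δOH_nerveFace hik hij hjm]
  have hdsTo : dProd (fun j => G.dsTo i m (G.gE (G.wbarMap (δOH k m (m+1)) g) j)) i m =
      G.map (δOH k m (m+1)) (dProd (nerveFace k fun l => G.dsTo i (m+1) (G.gE g l)) i m) := by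
    rw [G.map_dProd]
    exact dProd_congr fun j hij hjm => G.dsTo_gE_wbarMap_δOH_of_lt g hik hij hjm
  rw [G.y_eq m _ i, hds, hdsTo, G.map_mul, G.map_inv]

theorem map_δOH_y_of_succ_eq (g : ∀ j : ℕ, G.obj j) (hik : i+1 = k) (him : i < m) :
    G.map (δOH k m (m+1))
        ((dProd (nerveFace k fun l => G.ds i l (G.y (m+1) g l)) (i+1) m)⁻¹ *
          dProd (nerveFace k fun l => G.dsTo i (m+1) (g l)) i m) =
      G.map (δOH k m (m+1)) (G.y (m+1) g (i+1) * G.y (m+1) g i) := by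
  rw [dProd_nerveFace_of_le _ hik.ge,
    dProd_nerveFace _ (show i < k by omega) (show k ≤ m by omega), G.y_eq (m+1) g i,
    dProd_eq_mul_of_lt _ (show i+1 < m+1 by omega), mul_inv_rev]
  simp only [G.map_mul, G.map_inv, G.map_δOH_ds_of_succ_eq hik him.le]
  group

theorem map_δOH_y_of_lt_of_le (g : ∀ j : ℕ, G.obj j) (hik : i+1 < k) (hkm : k ≤ m) :
    G.map (δOH k m (m+1))
        ((dProd (nerveFace k fun l => G.ds i l (G.y (m+1) g l)) (i+1) m)⁻¹ *
          dProd (nerveFace k fun l => G.dsTo i (m+1) (g l)) i m) =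
      G.map (δOH k m (m+1)) (G.y (m+1) g i) := by
  rw [dProd_nerveFace _ hik hkm, dProd_nerveFace _ (show i < k by omega) hkm, ← G.y_eq]

theorem map_δOH_y_of_lt (g : ∀ j : ℕ, G.obj j) (him : i < m) (hmk : m < k) :
    G.map (δOH k m (m+1))
        ((dProd (nerveFace k fun l => G.ds i l (G.y (m+1) g l)) (i+1) m)⁻¹ *
          dProd (nerveFace k fun l => G.dsTo i (m+1) (g l)) i m) =
      G.map (δOH k m (m+1)) (G.y (m+1) g i) := by
  rw [dProd_nerveFace_of_lt _ hmk, dProd_nerveFace_of_lt _ hmk, G.y_eq (m+1) g i,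
    dProd_succ_of_le _ (show i+1 ≤ m by omega), dProd_succ_of_le _ (show i ≤ m by omega),
    G.y_self, mul_inv_rev]
  simp only [G.map_mul, G.map_inv, G.map_δOH_ds_dsTo him hmk]
  group

theorem y_wbarMap_δOH (g : G.WbarN (m+1)) (him : i < m) :
    G.y m (G.gE (G.wbarMap (δOH k m (m+1)) g)) i =
      G.map (δOH k m (m+1)) (nerveFace k (G.y (m+1) (G.gE g)) i) := by
  revert him
  refine Nat.strong_decreasing_induction ⟨m, fun j hj hjm => absurd hjm (by omega)⟩
    (fun i ih him => ?_) i
  rcases lt_or_ge i k with hik | hki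
  · rw [G.y_wbarMap_δOH_of_lt g hik ih]
    rcases (show i+1 = k ∨ i+1 < k by omega) with h | h
    · rw [G.map_δOH_y_of_succ_eq _ h him, nerveFace, if_neg (by omega), if_pos h]
    · rw [nerveFace, if_neg (by omega), if_neg (by omega)]
      rcases le_or_gt k m with hkm | hmk
      · exact G.map_δOH_y_of_lt_of_le _ h hkm
      · exact G.map_δOH_y_of_lt _ him hmk
  · rw [G.y_wbarMap_δOH_of_le g hki ih, nerveFace, if_pos hki]

end SGrp
end Paper

open Paper Paper.SGrp in
theorem stmt_8_general (G : SGrp) (n : ℕ) (k : ℕ) (x : G.WbarN n) :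
    G.SGn (n-1) (G.wbarMap (δOH k (n-1) n) x) = G.diagMap (δOH k (n-1) n) (G.SGn n x) := by
  rcases n with _ | m
  · exact funext fun i => i.elim0
  · funext i
    show G.y m (G.gE (G.wbarMap (δOH k m (m+1)) x)) i =
      dProd (fun j => G.map (δOH k m (m+1)) (G.xE (G.SGn (m+1) x) j))
        (δOH k m (m+1) i.castSucc) (δOH k m (m+1) i.succ)
    rw [dProd_δOH_castSucc_succ, xE_SGn, ← map_nerveFace, G.y_wbarMap_δOH x i.is_lt]

open Paper Paper.SGrp in
/-- the maps `(S_G)_n : W̄_n G → Diag_n NG` commute with all face maps. -/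
theorem stmt_8 (G : SGrp) (n : ℕ) (hn : 1 ≤ n) (k : ℕ) (hk : k ≤ n) (x : G.WbarN n) :
    G.SGn (n-1) (G.wbarMap (δOH k (n-1) n) x) = G.diagMap (δOH k (n-1) n) (G.SGn n x) :=
  stmt_8_general G n k x
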